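/- Let H and K be complex Hilbert spaces, M a *-subalgebra of B(H), N a C*-subalgebra of B(K), Ω ∈ H a unit vector cyclic for M, Λ ∈ K a unit vector, μ(a) = ⟨Ω, aΩ⟩, ν(b) = ⟨Λ, bΛ⟩, and η : M → N a positive linear map with ν ∘ η = μ, with dual η′ : N′ → M′ determined by ⟨Ω, a η′(b′) Ω⟩ = ⟨Λ, η(a) b′ Λ⟩ for all a ∈ M, b′ ∈ N′. If η is n-positive for some n (i.e. the entrywise application of η to the n×n matrix algebra over M maps positive elements to positive elements), then η′ is n-positive as well. In particular, if η is completely positive (n-positive for every n), then η′ is completely positive. -/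

import Mathlib

/-!
Write the positive operator matrix `y ∈ Mₙ(N′)` as `z* z` with `z = √y`, the square root being
taken in `B(K ⊕ ⋯ ⊕ K)`. The entries of `z` still lie in `N′`, because `√y` commutes with every
operator commuting with `y`, in particular with the block-diagonal operators `c ⊕ ⋯ ⊕ c`, `c ∈ N`.
For `ξᵢ = aᵢ Ω` the duality relation then turns `∑ᵢⱼ ⟨ξᵢ, η′(yᵢⱼ) ξⱼ⟩` into
`∑ₘ ∑ᵢⱼ ⟨zₘᵢ Λ, η(aᵢ* aⱼ) zₘⱼ Λ⟩`, a sum of values of the `n`-positive map `η` at the positive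
Gram matrix `[aᵢ* aⱼ]`. Since `Ω` is cyclic, such `ξ` are dense in `Hⁿ`.
-/

open scoped ComplexOrder

noncomputable section

variable {H K : Type} [NormedAddCommGroup H] [InnerProductSpace ℂ H] [CompleteSpace H]
  [NormedAddCommGroup K] [InnerProductSpace ℂ K] [CompleteSpace K]

/-- The commutant of a (not necessarily unital) *-subalgebra of `B(H)`, as a unital
star subalgebra of `B(H)`. For a star-closed set this is the usual commutant. -/
def commutantOf {H : Type} [NormedAddCommGroup H] [InnerProductSpace ℂ H] [CompleteSpace H]
    (M : NonUnitalStarSubalgebra ℂ (H →L[ℂ] H)) : StarSubalgebra ℂ (H →L[ℂ] H) :=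
  StarSubalgebra.centralizer ℂ (M : Set (H →L[ℂ] H))

/-- Positivity of an `n × n` matrix of operators, regarded as an operator on `H ⊕ ⋯ ⊕ H`. -/
def MatPos {n : ℕ} (x : Fin n → Fin n → (H →L[ℂ] H)) : Prop :=
  ∀ ξ : Fin n → H, 0 ≤ ∑ i, ∑ j, (inner ℂ (ξ i) (x i j (ξ j)) : ℂ)

/-- The defining property of the dual map `η′ : N′ → M′` of `η : M → N`:
`⟨Ω, a η′(b′) Ω⟩ = ⟨Λ, η(a) b′ Λ⟩` for all `a ∈ M`, `b′ ∈ N′`. -/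
def IsDualOf (M : NonUnitalStarSubalgebra ℂ (H →L[ℂ] H))
    (N : NonUnitalStarSubalgebra ℂ (K →L[ℂ] K)) (Ω : H) (Λ : K)
    (η : ↥M → ↥N) (f : ↥(commutantOf N) → ↥(commutantOf M)) : Prop :=
  ∀ (a : ↥M) (b' : ↥(commutantOf N)),
    (inner ℂ Ω ((a : H →L[ℂ] H) ((f b' : H →L[ℂ] H) Ω)) : ℂ)
      = inner ℂ Λ ((η a : K →L[ℂ] K) ((b' : K →L[ℂ] K) Λ))

open ContinuousLinearMap
open scoped InnerProductSpace

section Blocks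

variable {𝕜 ι E : Type*} [RCLike 𝕜] [Fintype ι]
  [NormedAddCommGroup E] [InnerProductSpace 𝕜 E] [CompleteSpace E]

local notation "𝓔" => PiLp 2 (fun _ : ι => E)
local notation "π" => PiLp.proj 2 (𝕜 := 𝕜) (fun _ : ι => E)

lemma PiLp.adjoint_proj_apply [DecidableEq ι] (j : ι) (x : E) :
    adjoint (π j) x = PiLp.single 2 j x := by
  refine ext_inner_left 𝕜 fun v => ?_
  rw [adjoint_inner_right, PiLp.inner_apply, Finset.sum_eq_single j] <;> simp_all

lemma PiLp.proj_comp_adjoint_proj [DecidableEq ι] (i j : ι) :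
    π i ∘L adjoint (π j) = (1 : Matrix ι ι (E →L[𝕜] E)) i j := by
  ext x
  by_cases h : i = j <;> simp [PiLp.adjoint_proj_apply, Matrix.one_apply, h]

lemma PiLp.sum_adjoint_proj_comp_proj : ∑ i, adjoint (π i) ∘L π i = 1 := by
  ext v : 1
  refine ext_inner_left 𝕜 fun w => ?_
  simp [inner_sum, adjoint_inner_right, PiLp.inner_apply]

def blocks (T : 𝓔 →L[𝕜] 𝓔) : Matrix ι ι (E →L[𝕜] E) :=
  Matrix.of fun i j => π i ∘L T ∘L adjoint (π j)

def ofBlocks (y : Matrix ι ι (E →L[𝕜] E)) : 𝓔 →L[𝕜] 𝓔 :=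
  ∑ i, ∑ j, adjoint (π i) ∘L y i j ∘L π j

lemma blocks_ofBlocks [DecidableEq ι] (y : Matrix ι ι (E →L[𝕜] E)) : blocks (ofBlocks y) = y := by
  ext i j : 1
  calc blocks (ofBlocks y) i j
      = ∑ k, ∑ l, (π i ∘L adjoint (π k)) ∘L y k l ∘L (π l ∘L adjoint (π j)) := by
        simp [blocks, ofBlocks, comp_finsetSum, finsetSum_comp, comp_assoc]
    _ = (1 * y * 1 : Matrix ι ι (E →L[𝕜] E)) i j := by
        simp only [PiLp.proj_comp_adjoint_proj, Matrix.mul_apply, Finset.sum_mul, ← mul_def]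
        exact Finset.sum_comm
    _ = y i j := by rw [mul_one, one_mul]

lemma ofBlocks_blocks (T : 𝓔 →L[𝕜] 𝓔) : ofBlocks (blocks T) = T := by
  calc ofBlocks (blocks T) = (∑ i, adjoint (π i) ∘L π i) ∘L T ∘L (∑ j, adjoint (π j) ∘L π j) := by
        simp only [ofBlocks, blocks, Matrix.of_apply, comp_assoc, comp_finsetSum, finsetSum_comp]
        exact Finset.sum_comm
    _ = T := by rw [PiLp.sum_adjoint_proj_comp_proj]; rfl

lemma blocks_injective : Function.Injective (blocks : (𝓔 →L[𝕜] 𝓔) → _) :=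
  Function.LeftInverse.injective ofBlocks_blocks

lemma blocks_mul (S T : 𝓔 →L[𝕜] 𝓔) : blocks (S * T) = blocks S * blocks T := by
  ext i j : 1
  calc blocks (S * T) i j = π i ∘L S ∘L (∑ m, adjoint (π m) ∘L π m) ∘L T ∘L adjoint (π j) := by
        rw [PiLp.sum_adjoint_proj_comp_proj]; rfl
    _ = (blocks S * blocks T) i j := by
        simp [blocks, Matrix.mul_apply, comp_finsetSum, finsetSum_comp, comp_assoc, mul_def]

lemma blocks_star (T : 𝓔 →L[𝕜] 𝓔) : blocks (star T) = star (blocks T) := by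
  ext i j : 1
  simp [blocks, star_eq_adjoint, adjoint_comp, comp_assoc]

lemma inner_ofBlocks (y : Matrix ι ι (E →L[𝕜] E)) (v w : 𝓔) :
    ⟪v, ofBlocks y w⟫_𝕜 = ∑ i, ∑ j, ⟪v i, y i j (w j)⟫_𝕜 := by
  simp [ofBlocks, inner_sum, adjoint_inner_right]

lemma commute_ofBlocks_diagonal_iff [DecidableEq ι] (c : E →L[𝕜] E) (T : 𝓔 →L[𝕜] 𝓔) :
    Commute (ofBlocks (Matrix.diagonal fun _ => c)) T ↔ ∀ i j, Commute c (blocks T i j) := by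
  simp only [Commute, SemiconjBy, ← blocks_injective.eq_iff, blocks_mul, blocks_ofBlocks,
    ← Matrix.ext_iff, Matrix.diagonal_mul, Matrix.mul_diagonal]

lemma inner_apply_star_mul_apply {b : E →L[𝕜] E} {z : Matrix ι ι (E →L[𝕜] E)} {i : ι}
    (h : ∀ m, Commute b (star (z m i))) (x : E) (j : ι) :
    ⟪x, b ((star z * z) i j x)⟫_𝕜 = ∑ m, ⟪z m i x, b (z m j x)⟫_𝕜 := by
  simp only [Matrix.mul_apply, Matrix.star_apply, sum_apply, map_sum, inner_sum]
  refine Finset.sum_congr rfl fun m _ => ?_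
  rw [mul_apply_eq_comp, ← mul_apply_eq_comp b, (h m).eq, mul_apply_eq_comp, star_eq_adjoint,
    adjoint_inner_right]

end Blocks

lemma ofBlocks_nonneg {ι E : Type*} [Fintype ι] [NormedAddCommGroup E] [InnerProductSpace ℂ E]
    [CompleteSpace E] {y : Matrix ι ι (E →L[ℂ] E)}
    (hy : ∀ v : ι → E, 0 ≤ ∑ i, ∑ j, ⟪v i, y i j (v j)⟫_ℂ) : 0 ≤ ofBlocks y := by
  rw [nonneg_iff_isPositive, isPositive_iff_complex]
  intro v
  have hv : 0 ≤ ⟪ofBlocks y v, v⟫_ℂ := by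
    rw [← inner_conj_symm, starRingEnd_apply, star_nonneg_iff, inner_ofBlocks]
    exact hy fun i => v i
  obtain ⟨hre, him⟩ := Complex.nonneg_iff.mp hv
  exact ⟨Complex.ext (by simp) (by simp [him]), hre⟩

theorem MatPos.exists_eq_star_mul_self {n : ℕ} {y : Matrix (Fin n) (Fin n) (K →L[ℂ] K)}
    (hy : MatPos y) :
    ∃ z : Matrix (Fin n) (Fin n) (K →L[ℂ] K), y = star z * z ∧
      ∀ c : K →L[ℂ] K, (∀ i j, Commute c (y i j)) → ∀ i j, Commute c (z i j) := by
  have hY : 0 ≤ ofBlocks y := ofBlocks_nonneg hy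
  have hsqrt : IsSelfAdjoint (CFC.sqrt (ofBlocks y)) := .of_nonneg (CFC.sqrt_nonneg (ofBlocks y))
  refine ⟨blocks (CFC.sqrt (ofBlocks y)), ?_, fun c hc => ?_⟩
  · rw [← blocks_star, ← blocks_mul, hsqrt.star_eq,
      CFC.sqrt_mul_sqrt_self _ hY, blocks_ofBlocks]
  · have hcY : Commute (ofBlocks (Matrix.diagonal fun _ => c)) (ofBlocks y) :=
      (commute_ofBlocks_diagonal_iff c _).mpr (by rwa [blocks_ofBlocks])
    exact (commute_ofBlocks_diagonal_iff c _).mp (hcY.symm.cfcₙ_nnreal NNReal.sqrt).symm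

lemma matPos_star_mul_self {n : ℕ} (a : Fin n → H →L[ℂ] H) :
    MatPos fun i j => star (a i) * a j := by
  intro ξ
  calc (0 : ℂ) ≤ ⟪∑ i, a i (ξ i), ∑ j, a j (ξ j)⟫_ℂ := by
        rw [inner_self_eq_norm_sq_to_K]; norm_cast; positivity
    _ = _ := by
        simp only [sum_inner, inner_sum, mul_apply_eq_comp, star_eq_adjoint, adjoint_inner_right]
        exact Finset.sum_comm

omit [CompleteSpace H] in
lemma matPos_of_dense {n : ℕ} {T : Fin n → Fin n → H →L[ℂ] H} {S : Set H} (hS : Dense S)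
    (hT : ∀ ξ : Fin n → H, (∀ i, ξ i ∈ S) → 0 ≤ ∑ i, ∑ j, ⟪ξ i, T i j (ξ j)⟫_ℂ) : MatPos T :=
  (dense_pi Set.univ fun _ _ => hS).induction (fun ξ hξ => hT ξ fun i => hξ i (Set.mem_univ i))
    (isClosed_le continuous_const (by fun_prop))

lemma commute_of_mem_commutantOf {M : NonUnitalStarSubalgebra ℂ (H →L[ℂ] H)} {a b : H →L[ℂ] H}
    (ha : a ∈ M) (hb : b ∈ commutantOf M) : Commute a b :=
  ((StarSubalgebra.mem_centralizer_iff ℂ).mp hb a ha).1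

lemma IsDualOf.inner_apply_apply {M : NonUnitalStarSubalgebra ℂ (H →L[ℂ] H)}
    {N : NonUnitalStarSubalgebra ℂ (K →L[ℂ] K)} {Ω : H} {Λ : K} {η : M → N}
    {η' : commutantOf N → commutantOf M} (hη' : IsDualOf M N Ω Λ η η') (a b : M)
    (b' : commutantOf N) :
    ⟪(a : H →L[ℂ] H) Ω, (η' b' : H →L[ℂ] H) ((b : H →L[ℂ] H) Ω)⟫_ℂ
      = ⟪Λ, (η (star a * b) : K →L[ℂ] K) ((b' : K →L[ℂ] K) Λ)⟫_ℂ := by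
  rw [← hη', ← mul_apply_eq_comp (η' b' : H →L[ℂ] H),
    ← (commute_of_mem_commutantOf b.2 (η' b').2).eq, ← adjoint_inner_right]
  simp [star_eq_adjoint]

theorem dual_map_nPositive_general
    (M : NonUnitalStarSubalgebra ℂ (H →L[ℂ] H)) (N : NonUnitalStarSubalgebra ℂ (K →L[ℂ] K))
    (Ω : H) (Λ : K)
    (hΩcyc : Dense (Set.range fun a : ↥M => (a : H →L[ℂ] H) Ω))
    (η : ↥M → ↥N)
    (η' : ↥(commutantOf N) → ↥(commutantOf M)) (hη' : IsDualOf M N Ω Λ η η')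
    (n : ℕ)
    (hn : ∀ x : Fin n → Fin n → ↥M,
      MatPos (fun i j => (x i j : H →L[ℂ] H)) → MatPos (fun i j => (η (x i j) : K →L[ℂ] K))) :
    ∀ y : Fin n → Fin n → ↥(commutantOf N),
      MatPos (fun i j => (y i j : K →L[ℂ] K)) →
        MatPos (fun i j => (η' (y i j) : H →L[ℂ] H)) := by
  intro y hy
  obtain ⟨z, hyz, hz⟩ := MatPos.exists_eq_star_mul_self hy
  have hzN : ∀ b ∈ N, ∀ i m, Commute b (star (z m i)) := fun b hb i m => by
    simpa using
      (hz (star b) (fun i j => commute_of_mem_commutantOf (star_mem hb) (y i j).2) m i).star_star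
  refine matPos_of_dense hΩcyc fun ξ hξ => ?_
  choose a ha using hξ
  obtain rfl : ξ = fun i => (a i : H →L[ℂ] H) Ω := funext fun i => (ha i).symm
  let x : Fin n → Fin n → M := fun i j => star (a i) * a j
  have hx : MatPos fun i j => (x i j : H →L[ℂ] H) := by
    simpa [x] using matPos_star_mul_self fun i => (a i : H →L[ℂ] H)
  calc (0 : ℂ) ≤ ∑ m, ∑ i, ∑ j, ⟪z m i Λ, (η (x i j) : K →L[ℂ] K) (z m j Λ)⟫_ℂ :=
        Finset.sum_nonneg fun m _ => hn x hx fun i => z m i Λ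
    _ = ∑ i, ∑ j, ⟪Λ, (η (x i j) : K →L[ℂ] K) ((y i j : K →L[ℂ] K) Λ)⟫_ℂ := by
        rw [Finset.sum_comm]
        refine Finset.sum_congr rfl fun i _ => ?_
        rw [Finset.sum_comm]
        refine Finset.sum_congr rfl fun j _ => ?_
        rw [congrFun₂ hyz i j, inner_apply_star_mul_apply (hzN _ (η (x i j)).2 i)]
    _ = _ := Finset.sum_congr rfl fun i _ => Finset.sum_congr rfl fun j _ =>
        (hη'.inner_apply_apply (a i) (a j) (y i j)).symm

/-- If the positive map `η` (with `ν ∘ η = μ`) is `n`-positive, then so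
is its dual `η′ : N′ → M′`.  (In particular, if `η` is completely positive then so is `η′`,
since this holds for every `n`.) -/
theorem dual_map_nPositive
    (M : NonUnitalStarSubalgebra ℂ (H →L[ℂ] H)) (N : NonUnitalStarSubalgebra ℂ (K →L[ℂ] K))
    (hNclosed : IsClosed (N : Set (K →L[ℂ] K)))
    (Ω : H) (Λ : K) (hΩunit : ‖Ω‖ = 1) (hΛunit : ‖Λ‖ = 1)
    (hΩcyc : Dense (Set.range fun a : ↥M => (a : H →L[ℂ] H) Ω))
    (η : ↥M → ↥N) (hηlin : IsLinearMap ℂ η)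
    (hηpos : ∀ a : ↥M, (∀ ξ : H, 0 ≤ (inner ℂ ξ ((a : H →L[ℂ] H) ξ) : ℂ)) →
      ∀ ξ : K, 0 ≤ (inner ℂ ξ ((η a : K →L[ℂ] K) ξ) : ℂ))
    (hstate : ∀ a : ↥M,
      (inner ℂ Λ ((η a : K →L[ℂ] K) Λ) : ℂ) = inner ℂ Ω ((a : H →L[ℂ] H) Ω))
    (η' : ↥(commutantOf N) → ↥(commutantOf M)) (hη' : IsDualOf M N Ω Λ η η')
    (n : ℕ)
    (hn : ∀ x : Fin n → Fin n → ↥M,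
      MatPos (fun i j => (x i j : H →L[ℂ] H)) → MatPos (fun i j => (η (x i j) : K →L[ℂ] K))) :
    ∀ y : Fin n → Fin n → ↥(commutantOf N),
      MatPos (fun i j => (y i j : K →L[ℂ] K)) →
        MatPos (fun i j => (η' (y i j) : H →L[ℂ] H)) :=
  dual_map_nPositive_general M N Ω Λ hΩcyc η η' hη' n hn
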